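/- arXiv:2011.07695 — 4 statements merged into one kernel-verified Lean document; each statement's English description precedes it below -/
import Mathlib

section
/- Let 0 ≤ k ≤ n be integers and let S ∈ {n;k} with Out(S) = ∅. Then the map T ↦ Out(T) is a bijection from {T ∈ {n;k} : T ≤_adm S} onto the set of subsets of In(S), and for T, T′ in this set one has T ≤_adm T′ if and only if Out(T′) ⊆ Out(T). In particular this map is an isomorphism of posets from ({T : T ≤_adm S}, ≤_adm) to the opposite of the poset of subsets of In(S) ordered by inclusion. -/
/-!
Write `S` as `s_1 < ⋯ < s_k`. Since `Out(S) = ∅`, the entries `s_i` with `i ∈ In(S)` can be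
lowered by one independently of each other: for `B ⊆ In(S)`, lowering `s_i` to `s_i - 1` for all
`i ∈ B` gives a set `lowerAt k S B ∈ {n;k}` whose `Out` is exactly `B`, because lowering flips the
parity of `s_i` and opens a gap above `s_i - 1`, while `Out(S) = ∅` rules out any other gap of the
wrong parity. An elementary step `lowerAt (insert r B) ⋖ lowerAt B` raises the entry `r` back, so
`lowerAt` turns reverse inclusion into `≤_adm`. Conversely, if `T ⋖ lowerAt B`, the raised entry
`r` must land on the parity of `k`, which forces `r ∉ B`, `r ∈ In(S)` and
`T = lowerAt (insert r B)`. So the elements below `S` are exactly the sets `lowerAt B`, each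
recovering `B` as its `Out`, and every step removes one index from `Out`.
-/

open scoped BigOperators

/-- `{n;k}`: the set of subsets of `{1,…,n}` of cardinality `k`. -/
def Sset (n k : ℕ) : Finset (Finset ℕ) := (Finset.Icc 1 n).powersetCard k

/-- `elt S r` is `s_r`, the `r`-th smallest element of `S` (1-indexed); junk value `0` out of range. -/
def elt (S : Finset ℕ) (r : ℕ) : ℕ := (S.sort (· ≤ ·)).getD (r - 1) 0

/-- `s_{r+1}`, with the convention `s_{k+1} = n+1`. -/
def nxt (n : ℕ) (S : Finset ℕ) (r : ℕ) : ℕ := if r = S.card then n + 1 else elt S (r + 1)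

/-- `s_{r-1}`, with the convention `s_0 = 0`. -/
def prv (S : Finset ℕ) (r : ℕ) : ℕ := if r = 1 then 0 else elt S (r - 1)

/-- `S_r`: the set obtained from `S` by replacing `s_r` with `s_r + 1`. -/
def Sr (S : Finset ℕ) (r : ℕ) : Finset ℕ := insert (elt S r + 1) (S.erase (elt S r))

/-- `In(S) = {i ∈ {1,…,k} : s_i ≡ k (mod 2) and s_{i−1} < s_i − 1}` (convention `s_0 = 0`). -/
def InS (k : ℕ) (S : Finset ℕ) : Finset ℕ :=
  (Finset.Icc 1 k).filter fun i => elt S i % 2 = k % 2 ∧ prv S i + 1 < elt S i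

/-- `Out(S) = {i ∈ {1,…,k} : s_i ≢ k (mod 2) and s_i + 1 < s_{i+1}}` (convention `s_{k+1} = n+1`). -/
def OutS (n k : ℕ) (S : Finset ℕ) : Finset ℕ :=
  (Finset.Icc 1 k).filter fun i => ¬ (elt S i % 2 = k % 2) ∧ elt S i + 1 < nxt n S i

/-- An elementary admissible step `S ⋖ S_r`, for `1 ≤ r ≤ k` with `s_{r+1} − s_r > 1`
and `k − s_r` odd. -/
def AdmStep (n k : ℕ) (S T : Finset ℕ) : Prop :=
  ∃ r, 1 ≤ r ∧ r ≤ k ∧ 1 < nxt n S r - elt S r ∧ Odd ((k : ℤ) - elt S r) ∧ T = Sr S r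

/-- The admissible order `≤_adm`: the reflexive-transitive closure of elementary steps. -/
def AdmLE (n k : ℕ) (S T : Finset ℕ) : Prop := Relation.ReflTransGen (AdmStep n k) S T

open Finset

section Enumeration

variable {T T' : Finset ℕ} {k r r' : ℕ}

lemma elt_eq_orderEmbOfFin (hT : T.card = k) (hr : 1 ≤ r) (hrk : r ≤ k) :
    elt T r = T.orderEmbOfFin hT ⟨r - 1, by omega⟩ :=
  List.getD_eq_getElem _ _ _

lemma elt_mem (hT : T.card = k) (hr : 1 ≤ r) (hrk : r ≤ k) : elt T r ∈ T := by
  rw [elt_eq_orderEmbOfFin hT hr hrk]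
  exact orderEmbOfFin_mem T hT _

lemma elt_lt_elt (hT : T.card = k) (hr : 1 ≤ r) (h : r < r') (hr' : r' ≤ k) :
    elt T r < elt T r' := by
  rw [elt_eq_orderEmbOfFin hT hr (by omega), elt_eq_orderEmbOfFin hT (by omega) hr']
  exact (T.orderEmbOfFin hT).strictMono (Fin.mk_lt_mk.2 (by omega))

lemma elt_le_elt (hT : T.card = k) (hr : 1 ≤ r) (h : r ≤ r') (hr' : r' ≤ k) :
    elt T r ≤ elt T r' := by
  rcases h.eq_or_lt with rfl | h
  · rfl
  · exact (elt_lt_elt hT hr h hr').le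

lemma exists_elt_eq_of_mem (hT : T.card = k) {x : ℕ} (hx : x ∈ T) :
    ∃ r, 1 ≤ r ∧ r ≤ k ∧ elt T r = x := by
  rw [← mem_coe, ← range_orderEmbOfFin T hT] at hx
  obtain ⟨⟨i, hi⟩, rfl⟩ := hx
  exact ⟨i + 1, by omega, hi, by rw [elt_eq_orderEmbOfFin hT (by omega) hi]; rfl⟩

lemma eq_of_elt_eq (hT : T.card = k) (hT' : T'.card = k)
    (h : ∀ r, 1 ≤ r → r ≤ k → elt T r = elt T' r) : T = T' := by
  have : T.orderEmbOfFin hT = T'.orderEmbOfFin hT' := by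
    ext ⟨i, hi⟩
    have := h (i + 1) (by omega) hi
    rwa [elt_eq_orderEmbOfFin hT (by omega) hi, elt_eq_orderEmbOfFin hT' (by omega) hi] at this
  rw [← coe_inj, ← range_orderEmbOfFin T hT, ← range_orderEmbOfFin T' hT', this]

lemma elt_eq_of_strictMonoOn {f : ℕ → ℕ} (hT : T.card = k)
    (hf : StrictMonoOn f (Set.Icc 1 k))
    (hfT : ∀ i, 1 ≤ i → i ≤ k → f i ∈ T) (hr : 1 ≤ r) (hrk : r ≤ k) : elt T r = f r := by
  have hmono : StrictMono fun i : Fin k => f (i + 1) := fun i j hij =>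
    hf ⟨by omega, by omega⟩ ⟨by omega, by omega⟩ (by simpa using hij)
  rw [elt_eq_orderEmbOfFin hT hr hrk,
    ← orderEmbOfFin_unique hT (fun i => hfT _ (by omega) (by omega)) hmono]
  exact congrArg f (Nat.sub_add_cancel hr)

lemma card_image_Icc_of_strictMonoOn {f : ℕ → ℕ} (hf : StrictMonoOn f (Set.Icc 1 k)) :
    ((Icc 1 k).image f).card = k := by
  rw [card_image_of_injOn (by simpa using hf.injOn), Nat.card_Icc, Nat.add_sub_cancel]

end Enumeration

section Sets

variable {n k r i : ℕ} {S T U : Finset ℕ}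

lemma mem_Sset : T ∈ Sset n k ↔ T ⊆ Icc 1 n ∧ T.card = k := mem_powersetCard

lemma card_of_mem_Sset (hT : T ∈ Sset n k) : T.card = k := (mem_Sset.1 hT).2

lemma elt_mem_Icc (hT : T ∈ Sset n k) (hr : 1 ≤ r) (hrk : r ≤ k) :
    1 ≤ elt T r ∧ elt T r ≤ n :=
  mem_Icc.1 ((mem_Sset.1 hT).1 (elt_mem (card_of_mem_Sset hT) hr hrk))

lemma nxt_of_eq (hT : T.card = k) : nxt n T k = n + 1 := by
  rw [nxt, hT, if_pos rfl]

lemma nxt_of_lt (hT : T.card = k) (h : r < k) : nxt n T r = elt T (r + 1) := by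
  rw [nxt, hT, if_neg h.ne]

lemma mem_InS :
    i ∈ InS k S ↔ 1 ≤ i ∧ i ≤ k ∧ elt S i % 2 = k % 2 ∧ prv S i + 1 < elt S i := by
  simp [InS, and_assoc]

lemma mem_OutS :
    i ∈ OutS n k T ↔ 1 ≤ i ∧ i ≤ k ∧ elt T i % 2 ≠ k % 2 ∧ elt T i + 1 < nxt n T i := by
  simp [OutS, and_assoc]

lemma two_le_elt_of_mem_InS (hi : i ∈ InS k S) : 2 ≤ elt S i := by
  have := (mem_InS.1 hi).2.2.2
  omega

lemma elt_pred_add_one_lt_of_mem_InS (hi : i ∈ InS k S) (h : 1 < i) :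
    elt S (i - 1) + 1 < elt S i := by
  have := (mem_InS.1 hi).2.2.2
  rwa [prv, if_neg h.ne'] at this

lemma elt_Sr (hT : T.card = k) (hr : 1 ≤ r) (hrk : r ≤ k) (hgap : elt T r + 1 < nxt n T r) :
    (Sr T r).card = k ∧
      ∀ j, 1 ≤ j → j ≤ k → elt (Sr T r) j = elt T j + if j = r then 1 else 0 := by
  have hnext : ∀ j, r < j → j ≤ k → elt T r + 1 < elt T j := fun j hrj hjk => by
    rw [nxt_of_lt hT (by omega)] at hgap
    have := elt_le_elt hT (by omega) (show r + 1 ≤ j by omega) hjk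
    omega
  have hmono : StrictMonoOn (fun j => elt T j + if j = r then 1 else 0) (Set.Icc 1 k) := by
    rintro i ⟨hi, -⟩ j ⟨-, hjk⟩ hij
    have := elt_lt_elt hT hi hij hjk
    by_cases hir : i = r
    · have := hnext j (by omega) hjk
      simp only [hir, show j ≠ r by omega, ↓reduceIte]; omega
    · simp only [hir, ↓reduceIte, add_zero]; split_ifs <;> omega
  have hnotMem : elt T r + 1 ∉ T.erase (elt T r) := fun hmem => by
    obtain ⟨j, hj, hjk, hjr⟩ := exists_elt_eq_of_mem hT (mem_of_mem_erase hmem)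
    by_cases hrj : r < j
    · have := hnext j hrj hjk; omega
    · have := elt_le_elt hT hj (show j ≤ r by omega) hrk; omega
  have hcard : (Sr T r).card = k := by
    rw [Sr, card_insert_of_notMem hnotMem, card_erase_of_mem (elt_mem hT hr hrk), hT]
    omega
  refine ⟨hcard, fun j hj hjk => elt_eq_of_strictMonoOn hcard hmono (fun i hi hik => ?_) hj hjk⟩
  by_cases hir : i = r
  · simp [Sr, hir]
  · have hne : elt T i ≠ elt T r := by
      rcases Nat.lt_or_gt_of_ne hir with h | h
      · exact (elt_lt_elt hT hi h hrk).ne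
      · exact (elt_lt_elt hT hr h hik).ne'
    simp only [Sr, hir, if_false, add_zero]
    exact mem_insert_of_mem (mem_erase.2 ⟨hne, elt_mem hT hi hik⟩)

lemma admStep_mem_Sset (hT : T ∈ Sset n k) (h : AdmStep n k T U) : U ∈ Sset n k := by
  obtain ⟨r, hr, hrk, hgap, -, rfl⟩ := h
  have hT' := card_of_mem_Sset hT
  have hnxt : nxt n T r ≤ n + 1 := by
    rcases hrk.eq_or_lt with rfl | hrk
    · rw [nxt_of_eq hT']
    · rw [nxt_of_lt hT' hrk]
      exact (elt_mem_Icc hT (by omega) hrk).2.trans (Nat.le_succ n)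
  have hmem : elt T r + 1 ∈ Icc 1 n := mem_Icc.2 ⟨by omega, by omega⟩
  exact mem_Sset.2 ⟨insert_subset hmem ((erase_subset _ _).trans (mem_Sset.1 hT).1),
    (elt_Sr (n := n) hT' hr hrk (by omega)).1⟩

end Sets

def lowerAt (k : ℕ) (S B : Finset ℕ) : Finset ℕ :=
  (Icc 1 k).image fun j => elt S j - if j ∈ B then 1 else 0

section LowerAt

variable {n k r : ℕ} {S T B : Finset ℕ}

lemma strictMonoOn_lowerAt (hS : S.card = k) (hB : B ⊆ InS k S) :
    StrictMonoOn (fun j => elt S j - if j ∈ B then 1 else 0) (Set.Icc 1 k) := by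
  rintro i ⟨hi, -⟩ j ⟨-, hjk⟩ hij
  have := elt_lt_elt hS hi hij hjk
  by_cases hjB : j ∈ B
  · have := elt_le_elt hS hi (show i ≤ j - 1 by omega) (by omega)
    have := elt_pred_add_one_lt_of_mem_InS (hB hjB) (by omega)
    simp only [hjB, ↓reduceIte]; split_ifs <;> omega
  · simp only [hjB, ↓reduceIte]; split_ifs <;> omega

lemma card_lowerAt (hS : S.card = k) (hB : B ⊆ InS k S) : (lowerAt k S B).card = k :=
  card_image_Icc_of_strictMonoOn (strictMonoOn_lowerAt hS hB)

lemma elt_lowerAt (hS : S.card = k) (hB : B ⊆ InS k S) (hr : 1 ≤ r) (hrk : r ≤ k) :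
    elt (lowerAt k S B) r = elt S r - if r ∈ B then 1 else 0 :=
  elt_eq_of_strictMonoOn (card_lowerAt hS hB) (strictMonoOn_lowerAt hS hB)
    (fun _ hi hik => mem_image_of_mem _ (mem_Icc.2 ⟨hi, hik⟩)) hr hrk

lemma lowerAt_empty (hS : S.card = k) : lowerAt k S ∅ = S :=
  eq_of_elt_eq (card_lowerAt hS (empty_subset _)) hS fun r hr hrk => by
    simp [elt_lowerAt hS (empty_subset _) hr hrk]

lemma lowerAt_mem_Sset (hS : S ∈ Sset n k) (hB : B ⊆ InS k S) : lowerAt k S B ∈ Sset n k := by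
  have hS' := card_of_mem_Sset hS
  refine mem_Sset.2 ⟨fun x hx => ?_, card_lowerAt hS' hB⟩
  obtain ⟨j, hj, rfl⟩ := mem_image.1 hx
  obtain ⟨hj1, hjk⟩ := mem_Icc.1 hj
  have := elt_mem_Icc hS hj1 hjk
  by_cases hjB : j ∈ B
  · have := two_le_elt_of_mem_InS (hB hjB)
    simp only [hjB, ↓reduceIte, mem_Icc]; omega
  · simp only [hjB, ↓reduceIte, mem_Icc]; omega

lemma OutS_lowerAt (hS : S ∈ Sset n k) (hout : OutS n k S = ∅) (hB : B ⊆ InS k S) :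
    OutS n k (lowerAt k S B) = B := by
  have hS' := card_of_mem_Sset hS
  have hU := card_lowerAt hS' hB
  ext i
  rw [mem_OutS]
  by_cases hiB : i ∈ B
  · obtain ⟨hi, hik, hpar, hprv⟩ := mem_InS.1 (hB hiB)
    refine iff_of_true ?_ hiB
    rw [elt_lowerAt hS' hB hi hik, if_pos hiB]
    refine ⟨hi, hik, by omega, ?_⟩
    rcases hik.eq_or_lt with rfl | hik
    · rw [nxt_of_eq hU]
      have := elt_mem_Icc hS hi le_rfl
      omega
    · rw [nxt_of_lt hU hik, elt_lowerAt hS' hB (r := i + 1) (by omega) hik]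
      have := elt_lt_elt hS' hi (lt_add_one i) hik
      split_ifs with hi1B
      · have := elt_pred_add_one_lt_of_mem_InS (hB hi1B) (by omega)
        rw [Nat.add_sub_cancel] at this
        omega
      · omega
  · refine iff_of_false ?_ hiB
    rintro ⟨hi, hik, hpar, hgap⟩
    rw [elt_lowerAt hS' hB hi hik, if_neg hiB, Nat.sub_zero] at hpar hgap
    refine (hout ▸ notMem_empty i) (mem_OutS.2 ⟨hi, hik, hpar, ?_⟩)
    rcases hik.eq_or_lt with rfl | hik
    · rw [nxt_of_eq hU] at hgap
      rwa [nxt_of_eq hS']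
    · rw [nxt_of_lt hU hik, elt_lowerAt hS' hB (r := i + 1) (by omega) hik] at hgap
      rw [nxt_of_lt hS' hik]
      omega

lemma admStep_lowerAt_insert (hS : S ∈ Sset n k) (hout : OutS n k S = ∅)
    (hB : insert r B ⊆ InS k S) (hr : r ∉ B) :
    AdmStep n k (lowerAt k S (insert r B)) (lowerAt k S B) := by
  have hS' := card_of_mem_Sset hS
  have hrOut : r ∈ OutS n k (lowerAt k S (insert r B)) := by
    rw [OutS_lowerAt hS hout hB]
    exact mem_insert_self r B
  obtain ⟨hr1, hrk, hpar, hgap⟩ := mem_OutS.1 hrOut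
  refine ⟨r, hr1, hrk, by omega, by rw [Int.odd_iff]; omega, ?_⟩
  obtain ⟨hcard, helt⟩ := elt_Sr (card_lowerAt hS' hB) hr1 hrk hgap
  refine eq_of_elt_eq (card_lowerAt hS' ((subset_insert r B).trans hB)) hcard fun j hj hjk => ?_
  rw [helt j hj hjk, elt_lowerAt hS' hB hj hjk,
    elt_lowerAt hS' ((subset_insert r B).trans hB) hj hjk]
  have := two_le_elt_of_mem_InS (hB (mem_insert_self r B))
  by_cases hjr : j = r
  · subst hjr
    simp only [hr, mem_insert_self, ↓reduceIte]
    omega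
  · simp only [hjr, mem_insert, false_or, ↓reduceIte, add_zero]

lemma admLE_lowerAt (hS : S ∈ Sset n k) (hout : OutS n k S = ∅) {B' : Finset ℕ}
    (hB : B ⊆ InS k S) (hB' : B' ⊆ B) : AdmLE n k (lowerAt k S B) (lowerAt k S B') := by
  obtain ⟨D, rfl⟩ : ∃ D, B = D ∪ B' := ⟨B \ B', (sdiff_union_of_subset hB').symm⟩
  clear hB'
  induction D using Finset.induction_on with
  | empty => rw [empty_union]; exact Relation.ReflTransGen.refl
  | insert a D _ ih =>
    rw [insert_union] at hB ⊢
    by_cases haD : a ∈ D ∪ B'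
    · rw [insert_eq_of_mem haD]
      exact ih ((subset_insert a _).trans hB)
    · exact Relation.ReflTransGen.head (admStep_lowerAt_insert hS hout hB haD)
        (ih ((subset_insert a _).trans hB))

lemma exists_insert_of_admStep (hS : S.card = k) (hT : T ∈ Sset n k) (hB : B ⊆ InS k S)
    (h : AdmStep n k T (lowerAt k S B)) :
    ∃ r ∈ InS k S, r ∉ B ∧ T = lowerAt k S (insert r B) := by
  have hT' := card_of_mem_Sset hT
  obtain ⟨r, hr1, hrk, hgap, hodd, hU⟩ := h
  rw [Int.odd_iff] at hodd
  obtain ⟨-, helt⟩ := elt_Sr (n := n) hT' hr1 hrk (by omega)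
  have hstep : ∀ j, 1 ≤ j → j ≤ k →
      elt T j + (if j = r then 1 else 0) = elt S j - if j ∈ B then 1 else 0 := fun j hj hjk => by
    rw [← helt j hj hjk, ← hU, elt_lowerAt hS hB hj hjk]
  have hrB : r ∉ B := fun hrB => by
    have := mem_InS.1 (hB hrB)
    have := hstep r hr1 hrk
    simp only [hrB, ↓reduceIte] at this
    omega
  have hr := hstep r hr1 hrk
  simp only [hrB, ↓reduceIte, Nat.sub_zero] at hr
  have hrIn : r ∈ InS k S := by
    refine mem_InS.2 ⟨hr1, hrk, by omega, ?_⟩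
    rw [prv]
    split_ifs with hr1'
    · have := elt_mem_Icc hT hr1 hrk
      omega
    · have := elt_lt_elt hT' (show 1 ≤ r - 1 by omega) (show r - 1 < r by omega) hrk
      have hprev := hstep (r - 1) (by omega) (by omega)
      by_cases hB1 : r - 1 ∈ B
      · have := mem_InS.1 (hB hB1)
        simp only [hB1, show r - 1 ≠ r by omega, ↓reduceIte] at hprev
        omega
      · simp only [hB1, show r - 1 ≠ r by omega, ↓reduceIte] at hprev
        omega
  have hB' := insert_subset hrIn hB
  refine ⟨r, hrIn, hrB, eq_of_elt_eq hT' (card_lowerAt hS hB') fun j hj hjk => ?_⟩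
  rw [elt_lowerAt hS hB' hj hjk]
  have := hstep j hj hjk
  by_cases hjr : j = r
  · subst hjr
    simp only [mem_insert_self, ↓reduceIte]
    omega
  · simpa only [hjr, mem_insert, false_or, ↓reduceIte, add_zero] using this

lemma exists_lowerAt_of_admLE (hS : S ∈ Sset n k) (hT : T ∈ Sset n k) (h : AdmLE n k T S) :
    ∃ B ⊆ InS k S, T = lowerAt k S B := by
  induction h using Relation.ReflTransGen.head_induction_on with
  | refl => exact ⟨∅, empty_subset _, (lowerAt_empty (card_of_mem_Sset hS)).symm⟩
  | head hstep _ ih =>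
    obtain ⟨B, hB, rfl⟩ := ih (admStep_mem_Sset hT hstep)
    obtain ⟨r, hr, -, rfl⟩ := exists_insert_of_admStep (card_of_mem_Sset hS) hT hB hstep
    exact ⟨_, insert_subset hr hB, rfl⟩

lemma OutS_subset_InS_of_admLE (hS : S ∈ Sset n k) (hout : OutS n k S = ∅) (hT : T ∈ Sset n k)
    (h : AdmLE n k T S) : OutS n k T ⊆ InS k S := by
  obtain ⟨B, hB, rfl⟩ := exists_lowerAt_of_admLE hS hT h
  rwa [OutS_lowerAt hS hout hB]

lemma eq_lowerAt_OutS_of_admLE (hS : S ∈ Sset n k) (hout : OutS n k S = ∅) (hT : T ∈ Sset n k)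
    (h : AdmLE n k T S) : T = lowerAt k S (OutS n k T) := by
  obtain ⟨B, hB, rfl⟩ := exists_lowerAt_of_admLE hS hT h
  rw [OutS_lowerAt hS hout hB]

lemma OutS_subset_OutS_of_admLE (hS : S ∈ Sset n k) (hout : OutS n k S = ∅) {T' : Finset ℕ}
    (hT : T ∈ Sset n k) (hT' : AdmLE n k T' S) (h : AdmLE n k T T') :
    OutS n k T' ⊆ OutS n k T := by
  induction h using Relation.ReflTransGen.head_induction_on with
  | refl => exact subset_refl _
  | head hstep hrest ih =>
    have hU := admStep_mem_Sset hT hstep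
    refine (ih hU).trans ?_
    obtain ⟨B, hB, rfl⟩ := exists_lowerAt_of_admLE hS hU (hrest.trans hT')
    obtain ⟨r, hr, -, rfl⟩ := exists_insert_of_admStep (card_of_mem_Sset hS) hT hB hstep
    rw [OutS_lowerAt hS hout hB, OutS_lowerAt hS hout (insert_subset hr hB)]
    exact subset_insert r B

end LowerAt

theorem stmt10_general (n k : ℕ) (S : Finset ℕ)
    (hS : S ∈ Sset n k) (hout : OutS n k S = ∅) :
    (∀ T, T ∈ Sset n k → AdmLE n k T S → OutS n k T ⊆ InS k S) ∧
    (∀ T T', T ∈ Sset n k → AdmLE n k T S → T' ∈ Sset n k → AdmLE n k T' S →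
      OutS n k T = OutS n k T' → T = T') ∧
    (∀ B ⊆ InS k S, ∃ T, T ∈ Sset n k ∧ AdmLE n k T S ∧ OutS n k T = B) ∧
    (∀ T T', T ∈ Sset n k → AdmLE n k T S → T' ∈ Sset n k → AdmLE n k T' S →
      (AdmLE n k T T' ↔ OutS n k T' ⊆ OutS n k T)) := by
  refine ⟨fun T hT hle => OutS_subset_InS_of_admLE hS hout hT hle, ?_, ?_, ?_⟩
  · intro T T' hT hle hT' hle' hOut
    rw [eq_lowerAt_OutS_of_admLE hS hout hT hle, eq_lowerAt_OutS_of_admLE hS hout hT' hle', hOut]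
  · intro B hB
    refine ⟨lowerAt k S B, lowerAt_mem_Sset hS hB, ?_, OutS_lowerAt hS hout hB⟩
    simpa only [lowerAt_empty (card_of_mem_Sset hS)] using admLE_lowerAt hS hout hB (empty_subset B)
  · intro T T' hT hle hT' hle'
    refine ⟨OutS_subset_OutS_of_admLE hS hout hT hle', fun hsub => ?_⟩
    rw [eq_lowerAt_OutS_of_admLE hS hout hT hle, eq_lowerAt_OutS_of_admLE hS hout hT' hle']
    exact admLE_lowerAt hS hout (OutS_subset_InS_of_admLE hS hout hT hle) hsub

/-- for `S ∈ {n;k}` with `Out(S) = ∅`, the map `T ↦ Out(T)` is a bijection from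
`{T ∈ {n;k} : T ≤_adm S}` onto the subsets of `In(S)`, and it is order-reversing in both
directions: `T ≤_adm T′ ↔ Out(T′) ⊆ Out(T)`; i.e. it is an isomorphism of posets onto the
opposite of the poset of subsets of `In(S)`. -/
theorem stmt10 (n k : ℕ) (hk : k ≤ n) (S : Finset ℕ)
    (hS : S ∈ Sset n k) (hout : OutS n k S = ∅) :
    (∀ T, T ∈ Sset n k → AdmLE n k T S → OutS n k T ⊆ InS k S) ∧
    (∀ T T', T ∈ Sset n k → AdmLE n k T S → T' ∈ Sset n k → AdmLE n k T' S →
      OutS n k T = OutS n k T' → T = T') ∧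
    (∀ B ⊆ InS k S, ∃ T, T ∈ Sset n k ∧ AdmLE n k T S ∧ OutS n k T = B) ∧
    (∀ T T', T ∈ Sset n k → AdmLE n k T S → T' ∈ Sset n k → AdmLE n k T' S →
      (AdmLE n k T T' ↔ OutS n k T' ⊆ OutS n k T)) :=
  stmt10_general n k S hS hout
end

section
/- Let r ≥ 0 be an integer. Consider the graded free abelian group with basis the set of subsets of {1,…,r}, graded by cardinality, and suppose d is a differential on it (d ∘ d = 0, lowering degree by 1) such that for every subset B and every i ∈ B the coefficient of B∖{i} in d(B) lies in {2, −2}, and the coefficient of A in d(B) is 0 whenever A is not of the form B∖{i}. Then any two such chain complexes are isomorphic; in particular each is isomorphic to the r-fold tensor power C^{⊗r}, where C is the chain complex with ℤ in homological degrees 1 and 0 and differential multiplication by 2. -/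
open scoped BigOperators

/-- An isomorphism of (co)chain complexes of abelian groups, where a complex is presented by a
finite basis `ι`, a degree function `deg : ι → ℤ`, and the matrix `D` of its differential:
a `ℤ`-linear equivalence commuting with the differentials and preserving the grading. -/
def CxIso {ι κ : Type*} [Fintype ι] [Fintype κ] (R : Type*) [CommRing R]
    (D₁ : Matrix ι ι R) (deg₁ : ι → ℤ) (D₂ : Matrix κ κ R) (deg₂ : κ → ℤ) : Prop :=
  ∃ e : (ι → R) ≃ₗ[R] (κ → R),
    (∀ v, e (D₁.mulVec v) = D₂.mulVec (e v)) ∧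
    (∀ (m : ℤ) (v : ι → R), (∀ i, deg₁ i ≠ m → v i = 0) → ∀ j, deg₂ j ≠ m → e v j = 0) ∧
    (∀ (m : ℤ) (w : κ → R), (∀ j, deg₂ j ≠ m → w j = 0) → ∀ i, deg₁ i ≠ m → e.symm w i = 0)

/-- The hypotheses of Statement 12 on a differential `D` on the graded free abelian group with
basis `Sub({1,…,r})` graded by cardinality: `D ∘ D = 0`; for `i ∈ B` the coefficient of
`B∖{i}` in `d(B)` lies in `{2, −2}`; and the coefficient of `A` in `d(B)` vanishes whenever `A`
is not of the form `B∖{i}` (in particular `d` lowers the degree by one). -/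
def CubeLike (r : ℕ) (D : Matrix (Finset (Fin r)) (Finset (Fin r)) ℤ) : Prop :=
  D * D = 0 ∧
  (∀ (B : Finset (Fin r)), ∀ i ∈ B, D (B.erase i) B = 2 ∨ D (B.erase i) B = -2) ∧
  (∀ A B : Finset (Fin r), (¬ ∃ i ∈ B, A = B.erase i) → D A B = 0)

/-- The `r`-fold tensor power `C^{⊗r}` of the chain complex `C = (ℤ →2→ ℤ)` (with `ℤ` in
homological degrees `1` and `0`), realized on its standard basis: the subsets `B ⊆ {1,…,r}`,
in homological degree `card B`, with the usual Koszul signs. -/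
def cubeDown (r : ℕ) : Matrix (Finset (Fin r)) (Finset (Fin r)) ℤ :=
  fun A B => ∑ i ∈ B, if A = B.erase i then (-1 : ℤ) ^ (B.filter (· < i)).card * 2 else 0


namespace Stmt12Aux

variable {r : ℕ}

/-- Erase is injective on members. -/
lemma erase_inj_on {B : Finset (Fin r)} {i j : Fin r} (hi : i ∈ B) (hj : j ∈ B)
    (h : B.erase i = B.erase j) : i = j := by
  by_contra hne
  have : i ∈ B.erase j := Finset.mem_erase.2 ⟨hne, hi⟩
  rw [← h] at this
  exact (Finset.mem_erase.1 this).1 rfl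

lemma cubeDown_edge {B : Finset (Fin r)} {i : Fin r} (hi : i ∈ B) :
    cubeDown r (B.erase i) B = (-1 : ℤ) ^ (B.filter (· < i)).card * 2 := by
  unfold cubeDown
  rw [Finset.sum_eq_single_of_mem i hi]
  · simp
  · intro j hj hne
    rw [if_neg]
    intro h
    exact hne (erase_inj_on hj hi h.symm)

lemma cubeDown_nonedge {A B : Finset (Fin r)} (h : ¬ ∃ i ∈ B, A = B.erase i) :
    cubeDown r A B = 0 := by
  unfold cubeDown
  apply Finset.sum_eq_zero
  intro i hi
  rw [if_neg]
  intro hA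
  exact h ⟨i, hi, hA⟩

end Stmt12Aux

namespace Stmt12Aux

/-- For an edge-supported matrix, the `(B∖{i,j}, B)` entry of the square has two terms. -/
lemma square_two_terms {M : Matrix (Finset (Fin r)) (Finset (Fin r)) ℤ}
    (hsupp : ∀ A B : Finset (Fin r), (¬ ∃ i ∈ B, A = B.erase i) → M A B = 0)
    {B : Finset (Fin r)} {i j : Fin r} (hi : i ∈ B) (hj : j ∈ B) (hij : i ≠ j) :
    (M * M) ((B.erase i).erase j) B =
      M ((B.erase i).erase j) (B.erase i) * M (B.erase i) B +
      M ((B.erase j).erase i) (B.erase j) * M (B.erase j) B := by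
  have hpair : B.erase i ≠ B.erase j := fun h => hij (erase_inj_on hi hj h)
  rw [Matrix.mul_apply,
    ← Finset.sum_subset (Finset.subset_univ ({B.erase i, B.erase j} : Finset (Finset (Fin r)))),
    Finset.sum_pair hpair, Finset.erase_right_comm (s := B)]
  intro C _ hC
  by_cases h1 : ∃ k ∈ B, C = B.erase k
  · obtain ⟨k, hk, rfl⟩ := h1
    by_cases h2 : ∃ l ∈ B.erase k, (B.erase i).erase j = (B.erase k).erase l
    · obtain ⟨l, hl, hA⟩ := h2
      exfalso
      have hkA : k ∉ (B.erase i).erase j := by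
        rw [hA]
        simp [Finset.mem_erase]
      have : k = j ∨ k = i := by
        by_contra hcon
        push_neg at hcon
        exact hkA (Finset.mem_erase.2 ⟨hcon.1, Finset.mem_erase.2 ⟨hcon.2, hk⟩⟩)
      apply hC
      rcases this with h | h <;> simp [h]
    · rw [hsupp _ _ h2, zero_mul]
  · rw [hsupp _ _ h1, mul_zero]

end Stmt12Aux

namespace Stmt12Aux

lemma cubeDown_cancel_lt {B : Finset (Fin r)} {i j : Fin r} (hi : i ∈ B) (hj : j ∈ B)
    (hij : i < j) :
    cubeDown r ((B.erase i).erase j) (B.erase i) * cubeDown r (B.erase i) B +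
      cubeDown r ((B.erase j).erase i) (B.erase j) * cubeDown r (B.erase j) B = 0 := by
  have hjB : j ∈ B.erase i := Finset.mem_erase.2 ⟨hij.ne', hj⟩
  have hiB : i ∈ B.erase j := Finset.mem_erase.2 ⟨hij.ne, hi⟩
  rw [cubeDown_edge hjB, cubeDown_edge hiB, cubeDown_edge hi, cubeDown_edge hj]
  have h1 : (B.erase i).filter (· < j) = (B.filter (· < j)).erase i :=
    Finset.filter_erase (p := (· < j)) i B
  have h2 : (B.erase j).filter (· < i) = B.filter (· < i) := by
    rw [Finset.filter_erase (p := (· < i)) j B, Finset.erase_eq_of_notMem]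
    simp [not_lt.2 hij.le]
  have hifilt : i ∈ B.filter (· < j) := Finset.mem_filter.2 ⟨hi, hij⟩
  have h3 : ((B.erase i).filter (· < j)).card = (B.filter (· < j)).card - 1 := by
    rw [h1, Finset.card_erase_of_mem hifilt]
  obtain ⟨c, hc⟩ : ∃ c, (B.filter (· < j)).card = c + 1 :=
    ⟨(B.filter (· < j)).card - 1, (Nat.succ_pred_eq_of_pos (Finset.card_pos.2 ⟨i, hifilt⟩)).symm⟩
  rw [h2, h3, hc]
  simp only [Nat.add_sub_cancel, pow_succ]
  ring

lemma cubeDown_cancel {B : Finset (Fin r)} {i j : Fin r} (hi : i ∈ B) (hj : j ∈ B)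
    (hij : i ≠ j) :
    cubeDown r ((B.erase i).erase j) (B.erase i) * cubeDown r (B.erase i) B +
      cubeDown r ((B.erase j).erase i) (B.erase j) * cubeDown r (B.erase j) B = 0 := by
  rcases lt_or_gt_of_ne hij with h | h
  · exact cubeDown_cancel_lt hi hj h
  · rw [add_comm]
    exact cubeDown_cancel_lt hj hi h

lemma cubeDown_cubeLike (r : ℕ) : CubeLike r (cubeDown r) := by
  refine ⟨?_, ?_, fun A B h => cubeDown_nonedge h⟩
  · ext A B
    rw [Matrix.zero_apply]
    by_cases hno : ∃ k ∈ B, ∃ l ∈ B.erase k, A = (B.erase k).erase l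
    · obtain ⟨k, hk, l, hl, rfl⟩ := hno
      obtain ⟨hlk, hlB⟩ := Finset.mem_erase.1 hl
      rw [square_two_terms (fun A B h => cubeDown_nonedge h) hk hlB (Ne.symm hlk)]
      exact cubeDown_cancel hk hlB (Ne.symm hlk)
    · rw [Matrix.mul_apply]
      apply Finset.sum_eq_zero
      intro C _
      by_cases h1 : ∃ k ∈ B, C = B.erase k
      · obtain ⟨k, hk, rfl⟩ := h1
        by_cases h2 : ∃ l ∈ B.erase k, A = (B.erase k).erase l
        · exact absurd ⟨k, hk, h2⟩ hno
        · rw [cubeDown_nonedge h2, zero_mul]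
      · rw [cubeDown_nonedge h1, mul_zero]
  · intro B i hi
    rw [cubeDown_edge hi]
    rcases Nat.even_or_odd (B.filter (· < i)).card with h | h
    · left; rw [h.neg_one_pow, one_mul]
    · right; rw [h.neg_one_pow]; ring

end Stmt12Aux

namespace Stmt12Aux

variable {D D' : Matrix (Finset (Fin r)) (Finset (Fin r)) ℤ}

lemma sign_mul_eq (hD : CubeLike r D) (hD' : CubeLike r D') {B : Finset (Fin r)} {i : Fin r}
    (hi : i ∈ B) :
    (D (B.erase i) B * D' (B.erase i) B).sign * D (B.erase i) B = D' (B.erase i) B := by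
  rcases hD.2.1 B i hi with h | h <;> rcases hD'.2.1 B i hi with h' | h' <;> rw [h, h'] <;> decide

lemma t_sq (hD : CubeLike r D) (hD' : CubeLike r D') {B : Finset (Fin r)} {i : Fin r}
    (hi : i ∈ B) :
    (D (B.erase i) B * D' (B.erase i) B).sign * (D (B.erase i) B * D' (B.erase i) B).sign
      = 1 := by
  rcases hD.2.1 B i hi with h | h <;> rcases hD'.2.1 B i hi with h' | h' <;> rw [h, h'] <;> decide

/-- The square (anticommutativity) relation for a cube-like differential. -/
lemma square_rel (hD : CubeLike r D) {B : Finset (Fin r)} {i j : Fin r}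
    (hi : i ∈ B) (hj : j ∈ B) (hij : i ≠ j) :
    D ((B.erase i).erase j) (B.erase i) * D (B.erase i) B
      = -(D ((B.erase j).erase i) (B.erase j) * D (B.erase j) B) := by
  have h := square_two_terms hD.2.2 hi hj hij
  rw [hD.1, Matrix.zero_apply] at h
  linarith

/-- The square relation for the sign ratio `t`. -/
lemma t_square (hD : CubeLike r D) (hD' : CubeLike r D') {B : Finset (Fin r)} {i j : Fin r}
    (hi : i ∈ B) (hj : j ∈ B) (hij : i ≠ j) :
    (D ((B.erase i).erase j) (B.erase i) * D' ((B.erase i).erase j) (B.erase i)).sign *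
        (D (B.erase i) B * D' (B.erase i) B).sign
      = (D ((B.erase j).erase i) (B.erase j) * D' ((B.erase j).erase i) (B.erase j)).sign *
        (D (B.erase j) B * D' (B.erase j) B).sign := by
  rw [← Int.sign_mul, ← Int.sign_mul]
  congr 1
  calc D ((B.erase i).erase j) (B.erase i) * D' ((B.erase i).erase j) (B.erase i) *
          (D (B.erase i) B * D' (B.erase i) B)
      = (D ((B.erase i).erase j) (B.erase i) * D (B.erase i) B) *
          (D' ((B.erase i).erase j) (B.erase i) * D' (B.erase i) B) := by ring
    _ = (-(D ((B.erase j).erase i) (B.erase j) * D (B.erase j) B)) *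
          (-(D' ((B.erase j).erase i) (B.erase j) * D' (B.erase j) B)) := by
        rw [square_rel hD hi hj hij, square_rel hD' hi hj hij]
    _ = _ := by ring

end Stmt12Aux

open Stmt12Aux in
/-- The change-of-basis sign attached to two cube-like differentials. -/
def stmt12eps {r : ℕ} (D D' : Matrix (Finset (Fin r)) (Finset (Fin r)) ℤ)
    (B : Finset (Fin r)) : ℤ :=
  if h : B.Nonempty then
    (D (B.erase (B.min' h)) B * D' (B.erase (B.min' h)) B).sign *
      stmt12eps D D' (B.erase (B.min' h))
  else 1
termination_by B.card
decreasing_by exact Finset.card_erase_lt_of_mem (B.min'_mem h)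

namespace Stmt12Aux

variable {D D' : Matrix (Finset (Fin r)) (Finset (Fin r)) ℤ}

lemma eps_sq (hD : CubeLike r D) (hD' : CubeLike r D') :
    ∀ n (B : Finset (Fin r)), B.card = n → stmt12eps D D' B * stmt12eps D D' B = 1 := by
  intro n
  induction n using Nat.strong_induction_on with
  | _ n ih =>
    intro B hB
    rw [stmt12eps]
    split_ifs with h
    · have h1 := t_sq hD hD' (B.min'_mem h)
      have h2 := ih (B.erase (B.min' h)).card
        (hB ▸ Finset.card_erase_lt_of_mem (B.min'_mem h)) _ rfl
      calc _ = ((D (B.erase (B.min' h)) B * D' (B.erase (B.min' h)) B).sign *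
              (D (B.erase (B.min' h)) B * D' (B.erase (B.min' h)) B).sign) *
              (stmt12eps D D' (B.erase (B.min' h)) * stmt12eps D D' (B.erase (B.min' h))) := by
            ring
        _ = 1 := by rw [h1, h2, mul_one]
    · norm_num

lemma eps_edge (hD : CubeLike r D) (hD' : CubeLike r D') :
    ∀ n (B : Finset (Fin r)), B.card = n → ∀ i ∈ B,
      stmt12eps D D' (B.erase i) * stmt12eps D D' B
        = (D (B.erase i) B * D' (B.erase i) B).sign := by
  intro n
  induction n using Nat.strong_induction_on with
  | _ n ih =>
    intro B hB i hi
    have hne : B.Nonempty := ⟨i, hi⟩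
    have hminB : ∀ h : B.Nonempty, B.min' h = B.min' hne := fun _ => rfl
    set m := B.min' hne with hm
    have hmB : m ∈ B := B.min'_mem hne
    have u1 : stmt12eps D D' B
        = (D (B.erase m) B * D' (B.erase m) B).sign * stmt12eps D D' (B.erase m) := by
      rw [stmt12eps, dif_pos hne]
    by_cases him : i = m
    · rw [him, u1, show stmt12eps D D' (B.erase m) *
          ((D (B.erase m) B * D' (B.erase m) B).sign * stmt12eps D D' (B.erase m))
          = (D (B.erase m) B * D' (B.erase m) B).sign *
            (stmt12eps D D' (B.erase m) * stmt12eps D D' (B.erase m)) from by ring,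
        eps_sq hD hD' _ _ rfl, mul_one]
    · have hiBm : i ∈ B.erase m := Finset.mem_erase.2 ⟨him, hi⟩
      have hmBi : m ∈ B.erase i := Finset.mem_erase.2 ⟨fun h => him h.symm, hmB⟩
      have hBine : (B.erase i).Nonempty := ⟨m, hmBi⟩
      have hmin : ∀ h : (B.erase i).Nonempty, (B.erase i).min' h = m := fun h =>
        le_antisymm (Finset.min'_le _ _ hmBi)
          (Finset.le_min' _ _ _ fun y hy => B.min'_le y (Finset.mem_of_mem_erase hy))
      have hAc : (B.erase i).erase m = (B.erase m).erase i := Finset.erase_right_comm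
      have u2 : stmt12eps D D' (B.erase i)
          = (D ((B.erase m).erase i) (B.erase i) * D' ((B.erase m).erase i) (B.erase i)).sign *
            stmt12eps D D' ((B.erase m).erase i) := by
        rw [stmt12eps, dif_pos hBine]
        simp only [hmin, hAc]
      have hIH := ih (B.erase m).card (hB ▸ Finset.card_erase_lt_of_mem hmB) _ rfl i hiBm
      have key := t_square hD hD' hi hmB him
      rw [hAc] at key
      have tsq1 := t_sq hD hD' (B := B.erase i) (i := m) hmBi
      rw [hAc] at tsq1
      rw [u1, u2]
      linear_combination ((D ((B.erase m).erase i) (B.erase i) *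
            D' ((B.erase m).erase i) (B.erase i)).sign *
          (D (B.erase m) B * D' (B.erase m) B).sign) * hIH -
        ((D ((B.erase m).erase i) (B.erase i) *
            D' ((B.erase m).erase i) (B.erase i)).sign) * key +
        (D (B.erase i) B * D' (B.erase i) B).sign * tsq1

end Stmt12Aux

namespace Stmt12Aux

lemma eps_mat (hD : CubeLike r D) (hD' : CubeLike r D') (A B : Finset (Fin r)) :
    stmt12eps D D' A * D A B = D' A B * stmt12eps D D' B := by
  by_cases h : ∃ i ∈ B, A = B.erase i
  · obtain ⟨i, hi, rfl⟩ := h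
    have h1 := eps_edge hD hD' B.card B rfl i hi
    have h2 := sign_mul_eq hD hD' hi
    have h3 := eps_sq hD hD' B.card B rfl
    linear_combination (D (B.erase i) B * stmt12eps D D' B) * h1 +
      stmt12eps D D' B * h2 - (stmt12eps D D' (B.erase i) * D (B.erase i) B) * h3
  · rw [hD.2.2 A B h, hD'.2.2 A B h, mul_zero, zero_mul]

lemma cube_iso (hD : CubeLike r D) (hD' : CubeLike r D') :
    CxIso ℤ D (fun B => (B.card : ℤ)) D' (fun B => (B.card : ℤ)) := by
  refine ⟨{ toFun := fun v B => stmt12eps D D' B * v B,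
            invFun := fun v B => stmt12eps D D' B * v B,
            map_add' := fun v w => by funext B; simp [mul_add]
            map_smul' := fun c v => by funext B; simp; ring
            left_inv := fun v => by
              funext B
              simp only [← mul_assoc, eps_sq hD hD' B.card B rfl, one_mul]
            right_inv := fun v => by
              funext B
              simp only [← mul_assoc, eps_sq hD hD' B.card B rfl, one_mul] },
    ?_, ?_, ?_⟩
  · intro v
    funext A
    show stmt12eps D D' A * (Matrix.mulVec D v A) = _
    simp only [Matrix.mulVec, dotProduct, Finset.mul_sum]
    show _ = ∑ B, D' A B * (stmt12eps D D' B * v B)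
    apply Finset.sum_congr rfl
    intro B _
    have := eps_mat hD hD' A B
    calc stmt12eps D D' A * (D A B * v B) = (stmt12eps D D' A * D A B) * v B := by ring
      _ = (D' A B * stmt12eps D D' B) * v B := by rw [this]
      _ = D' A B * (stmt12eps D D' B * v B) := by ring
  · intro m v hv j hj
    show stmt12eps D D' j * v j = 0
    rw [hv j hj, mul_zero]
  · intro m w hw i hi
    show stmt12eps D D' i * w i = 0
    rw [hw i hi, mul_zero]

end Stmt12Aux

/-- any two differentials on the graded free abelian group on `Sub({1,…,r})`
with all coefficients in `{2, −2}` as above yield isomorphic chain complexes; in particular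
each is isomorphic to the `r`-fold tensor power `C^{⊗r}`. -/
theorem stmt12 (r : ℕ) (D D' : Matrix (Finset (Fin r)) (Finset (Fin r)) ℤ)
    (hD : CubeLike r D) (hD' : CubeLike r D') :
    CxIso ℤ D (fun B => (B.card : ℤ)) D' (fun B => (B.card : ℤ)) ∧
    CxIso ℤ D (fun B => (B.card : ℤ)) (cubeDown r) (fun B => (B.card : ℤ)) := by
  exact ⟨Stmt12Aux.cube_iso hD hD', Stmt12Aux.cube_iso hD (Stmt12Aux.cubeDown_cubeLike r)⟩
end

section
/- Let 0 ≤ k ≤ n be integers, S = {s_1 < … < s_k} ∈ {n;k}, and let Θ = (θ_{(i,j)})_{(i,j) ∈ Z_S} be any family of real numbers. Let M := (Π_{(i,j) ∈ Z_S} R_j(θ_{(i,j)})) · 1_{n×k}, where the matrix product is taken in the total order of Z_S. Then for every 1 ≤ i ≤ k and every j with s_i < j ≤ n, the (j, i) entry of M is 0. -/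
open scoped BigOperators

/-- `R_j(θ)`: the `n×n` rotation by angle `θ` of the oriented `(j, j+1)`-coordinate plane of
`ℝ^n` (coordinates labelled `1,…,n`), the identity on all other coordinates. -/
noncomputable def Rmat (n : ℕ) (j : ℕ) (θ : ℝ) : Matrix (Fin n) (Fin n) ℝ :=
  fun a b =>
    if (a : ℕ) + 1 = j ∧ (b : ℕ) + 1 = j then Real.cos θ
    else if (a : ℕ) + 1 = j ∧ (b : ℕ) = j then -Real.sin θ
    else if (a : ℕ) = j ∧ (b : ℕ) + 1 = j then Real.sin θ
    else if (a : ℕ) = j ∧ (b : ℕ) = j then Real.cos θ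
    else if a = b then 1 else 0

/-- `Z_S = {(i,j) : 1 ≤ i ≤ k, i ≤ j ≤ s_i − 1}` as a list, enumerated in its total order:
`(i,j) ≤ (i′,j′)` iff `i < i′`, or `i = i′` and `j ≥ j′`. -/
def ZS (S : Finset ℕ) (k : ℕ) : List (ℕ × ℕ) :=
  (List.range k).flatMap fun i' =>
    (List.range (elt S (i' + 1) - (i' + 1))).map fun t => (i' + 1, elt S (i' + 1) - 1 - t)

/-- The first `k` columns of the `n×n` identity matrix. -/
def onesNK (n k : ℕ) : Matrix (Fin n) (Fin k) ℝ :=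
  fun a b => if (a : ℕ) = (b : ℕ) then 1 else 0

/-- The product `(Π_{(i,j) ∈ Z_S} R_j(θ_{(i,j)})) · 1_{n×k}`, taken in the total order of `Z_S`. -/
noncomputable def rotMat (n k : ℕ) (S : Finset ℕ) (Θ : ℕ × ℕ → ℝ) :
    Matrix (Fin n) (Fin k) ℝ :=
  ((ZS S k).map fun p => Rmat n p.2 (Θ p)).prod * onesNK n k

/-!
Split the product after the last factor of block `i = b + 1`. Every later factor `R_j` has
`j ≥ i > b + 1`, so it fixes `e_{b+1}`, the `(b+1)`-th column of `1_{n×k}`. Every earlier factor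
has `j < s_i ≤ s_{b+1}`, so it only mixes coordinates `≤ s_{b+1}` and leaves the rows below
`s_{b+1}` as in the identity. Hence the `(j, b+1)` entry with `j > s_{b+1}` is `δ_{j,b+1} = 0`,
because `b + 1 ≤ s_{b+1}`.
-/

section SortedElements

variable {S : Finset ℕ}

lemma elt_mem_s15 {i : ℕ} (hi1 : 1 ≤ i) (hi : i ≤ S.card) : elt S i ∈ S := by
  rw [elt, List.getD_eq_getElem _ _ (by rw [Finset.length_sort]; omega)]
  exact (Finset.mem_sort _).mp (List.getElem_mem _)

lemma elt_lt_elt_s15 {i j : ℕ} (hi1 : 1 ≤ i) (hij : i < j) (hj : j ≤ S.card) :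
    elt S i < elt S j := by
  rw [elt, elt, List.getD_eq_getElem _ _ (by rw [Finset.length_sort]; omega),
    List.getD_eq_getElem _ _ (by rw [Finset.length_sort]; omega)]
  exact S.sortedLT_sort.getElem_lt_getElem_iff.mpr (by omega)

lemma elt_mono {i j : ℕ} (hi1 : 1 ≤ i) (hij : i ≤ j) (hj : j ≤ S.card) :
    elt S i ≤ elt S j := by
  rcases hij.eq_or_lt with rfl | hij
  · exact le_rfl
  · exact (elt_lt_elt_s15 hi1 hij hj).le

lemma le_elt (h0 : 0 ∉ S) {i : ℕ} (hi : i ≤ S.card) : i ≤ elt S i := by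
  induction i with
  | zero => exact Nat.zero_le _
  | succ i ih =>
    rcases Nat.eq_zero_or_pos i with rfl | hi0
    · exact Nat.one_le_iff_ne_zero.mpr fun h => h0 (h ▸ elt_mem_s15 le_rfl hi)
    · exact (ih (by omega)).trans_lt (elt_lt_elt_s15 hi0 (by omega) hi)

end SortedElements

section ZS

variable (S : Finset ℕ) {k : ℕ}

lemma mem_ZS {p : ℕ × ℕ} (hp : p ∈ ZS S k) :
    1 ≤ p.1 ∧ p.1 ≤ k ∧ p.1 ≤ p.2 ∧ p.2 < elt S p.1 := by
  simp only [ZS, List.mem_flatMap, List.mem_map, List.mem_range] at hp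
  obtain ⟨i, hi, t, ht, rfl⟩ := hp
  dsimp only
  omega

lemma exists_ZS_eq_append {m : ℕ} (hm : m ≤ k) :
    ∃ L, ZS S k = ZS S m ++ L ∧ ∀ p ∈ L, m < p.1 := by
  obtain ⟨r, rfl⟩ := Nat.exists_eq_add_of_le hm
  refine ⟨_, by rw [ZS, List.range_add, List.flatMap_append, List.flatMap_map]; rfl, ?_⟩
  simp only [List.mem_flatMap, List.mem_map, List.mem_range]
  rintro p ⟨i, -, t, -, rfl⟩
  omega

end ZS

section

variable {m o α : Type*} [Fintype m] [DecidableEq m] [NonAssocSemiring α]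

lemma Matrix.mul_apply_of_row_eq_one {A : Matrix m m α} {a : m}
    (hA : ∀ z, A a z = (1 : Matrix m m α) a z) (B : Matrix m o α) (y : o) :
    (A * B) a y = B a y := by
  calc (A * B) a y = ((1 : Matrix m m α) * B) a y := by simp only [Matrix.mul_apply, hA]
    _ = B a y := by rw [Matrix.one_mul]

lemma Matrix.mul_apply_of_col_eq_one (A : Matrix o m α) {B : Matrix m m α} {y : m}
    (hB : ∀ z, B z y = (1 : Matrix m m α) z y) (x : o) : (A * B) x y = A x y := by
  calc (A * B) x y = (A * (1 : Matrix m m α)) x y := by simp only [Matrix.mul_apply, hB]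
    _ = A x y := by rw [Matrix.mul_one]

end

section Rotations

variable {n : ℕ}

lemma Rmat_apply_of_row_ne {j : ℕ} (θ : ℝ) {a : Fin n}
    (h1 : (a : ℕ) + 1 ≠ j) (h2 : (a : ℕ) ≠ j) (b : Fin n) :
    Rmat n j θ a b = (1 : Matrix (Fin n) (Fin n) ℝ) a b := by
  simp [Rmat, Matrix.one_apply, h1, h2]

lemma Rmat_apply_of_col_ne {j : ℕ} (θ : ℝ) {b : Fin n}
    (h1 : (b : ℕ) + 1 ≠ j) (h2 : (b : ℕ) ≠ j) (a : Fin n) :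
    Rmat n j θ a b = (1 : Matrix (Fin n) (Fin n) ℝ) a b := by
  simp [Rmat, Matrix.one_apply, h1, h2]

variable (Θ : ℕ × ℕ → ℝ)

lemma prod_Rmat_apply_of_lt_row {L : List (ℕ × ℕ)} {a : Fin n} (hL : ∀ p ∈ L, p.2 < a)
    (b : Fin n) :
    (L.map fun p => Rmat n p.2 (Θ p)).prod a b = (1 : Matrix (Fin n) (Fin n) ℝ) a b := by
  induction L generalizing b with
  | nil => rfl
  | cons p L ih =>
    have hp := hL p List.mem_cons_self
    rw [List.map_cons, List.prod_cons,
      Matrix.mul_apply_of_row_eq_one (Rmat_apply_of_row_ne _ (by omega) (by omega))]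
    exact ih (fun q hq => hL q (List.mem_cons_of_mem _ hq)) b

lemma prod_Rmat_apply_of_col_add_two_le {L : List (ℕ × ℕ)} {b : Fin n}
    (hL : ∀ p ∈ L, (b : ℕ) + 2 ≤ p.2) (a : Fin n) :
    (L.map fun p => Rmat n p.2 (Θ p)).prod a b = (1 : Matrix (Fin n) (Fin n) ℝ) a b := by
  induction L generalizing a with
  | nil => rfl
  | cons p L ih =>
    have hp := hL p List.mem_cons_self
    rw [List.map_cons, List.prod_cons,
      Matrix.mul_apply_of_col_eq_one _ (ih fun q hq => hL q (List.mem_cons_of_mem _ hq))]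
    exact Rmat_apply_of_col_ne _ (by omega) (by omega) a

end Rotations

theorem stmt15_general (n k : ℕ) (S : Finset ℕ) (hS : S ∈ Sset n k)
    (Θ : ℕ × ℕ → ℝ) (a : Fin n) (b : Fin k)
    (h : elt S ((b : ℕ) + 1) < (a : ℕ) + 1) :
    rotMat n k S Θ a b = 0 := by
  obtain ⟨hSsub, hcard⟩ := Finset.mem_powersetCard.mp hS
  have hb : (b : ℕ) + 1 ≤ S.card := hcard ▸ b.isLt
  have hba : (b : ℕ) + 1 < a + 1 := (le_elt (fun h0 => by simpa using hSsub h0) hb).trans_lt h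
  obtain ⟨L, hZ, hL⟩ := exists_ZS_eq_append S b.isLt
  have hhead : ∀ p ∈ ZS S (b + 1), p.2 < (a : ℕ) := fun p hp => by
    obtain ⟨h1, hpb, -, hp⟩ := mem_ZS S hp
    have := elt_mono h1 hpb hb
    omega
  have htail : ∀ p ∈ L, (b : ℕ) + 2 ≤ p.2 := fun p hp =>
    (hL p hp).trans_le (mem_ZS S (hZ ▸ List.mem_append_right _ hp)).2.2.1
  rw [rotMat, hZ, List.map_append, List.prod_append, Matrix.mul_assoc,
    Matrix.mul_apply_of_row_eq_one (prod_Rmat_apply_of_lt_row Θ hhead), Matrix.mul_apply]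
  refine Finset.sum_eq_zero fun y _ => ?_
  by_cases hy : (y : ℕ) = b
  · rw [prod_Rmat_apply_of_col_add_two_le Θ (hy ▸ htail), Matrix.one_apply_ne (by omega),
      zero_mul]
  · simp [onesNK, hy]

/-- for every `1 ≤ i ≤ k` and every `j` with `s_i < j ≤ n`, the `(j, i)` entry
(1-indexed) of the matrix `M = (Π_{(i,j) ∈ Z_S} R_j(θ_{(i,j)})) · 1_{n×k}` is `0`.
Here the row index is `a` with `j = a + 1` and the column index is `b` with `i = b + 1`. -/
theorem stmt15 (n k : ℕ) (hk : k ≤ n) (S : Finset ℕ) (hS : S ∈ Sset n k)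
    (Θ : ℕ × ℕ → ℝ) (a : Fin n) (b : Fin k)
    (h : elt S ((b : ℕ) + 1) < (a : ℕ) + 1) :
    rotMat n k S Θ a b = 0 :=
  stmt15_general n k S hS Θ a b h
end

section
/- Let 0 ≤ k ≤ n be integers. The Grassmannian Gr_k(ℝ^n), equipped with the quotient topology induced by the surjection col : V_k(n) → Gr_k(ℝ^n), is a compact Hausdorff topological space. -/
/-! Compactness: every `k`-dimensional subspace has an orthonormal basis, so `col` maps the
compact set of matrices with `Aᵀ * A = 1` onto `Gr_k(ℝ^n)`.

Hausdorffness: `A * (Aᵀ * A)⁻¹ * Aᵀ` is the orthogonal projection onto the column space of `A`.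
Being symmetric and idempotent, it is determined by its range, so it depends only on `col A`; it
depends continuously on `A`, hence descends to a continuous injection of `Gr_k(ℝ^n)` into the
Hausdorff space of `n × n` matrices. -/

open scoped BigOperators

/-- The Stiefel space `V_k(n)`: the `n×k` real matrices with linearly independent columns
(equivalently, injective linear maps `ℝ^k → ℝ^n`), an open subspace of the `n×k` matrices. -/
def Stiefel (n k : ℕ) : Set (Matrix (Fin n) (Fin k) ℝ) :=
  {A | LinearIndependent ℝ fun j : Fin k => fun i : Fin n => A i j}

/-- The column space of an `n×k` matrix. -/
def colSpan (n k : ℕ) (A : Matrix (Fin n) (Fin k) ℝ) : Submodule ℝ (Fin n → ℝ) :=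
  Submodule.span ℝ (Set.range fun j : Fin k => fun i : Fin n => A i j)

/-- The Grassmannian `Gr_k(ℝ^n)`: the set of `k`-dimensional linear subspaces of `ℝ^n`. -/
def Gr (n k : ℕ) : Type :=
  {W : Submodule ℝ (Fin n → ℝ) // Module.finrank ℝ W = k}

/-- `col`: the map sending a matrix with independent columns to its column space. -/
noncomputable def col (n k : ℕ) : Stiefel n k → Gr n k := fun A =>
  ⟨colSpan n k A.1, by
    exact (finrank_span_eq_card A.2).trans (Fintype.card_fin k)⟩

/-- The quotient topology on `Gr_k(ℝ^n)` induced by `col` from the subspace topology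
on the Stiefel space. -/
noncomputable instance grTop (n k : ℕ) : TopologicalSpace (Gr n k) :=
  TopologicalSpace.coinduced (col n k) inferInstance

namespace Matrix

section Projection

variable {R m p : Type*} [CommRing R] [Fintype m] [Fintype p] [DecidableEq p]

theorem mul_eq_right_of_range_le [DecidableEq m] {P Q : Matrix m m R} (hP : IsIdempotentElem P)
    (h : LinearMap.range Q.mulVecLin ≤ LinearMap.range P.mulVecLin) : P * Q = Q := by
  apply toLin'.injective
  rw [toLin'_mul]
  exact (LinearMap.IsIdempotentElem.comp_eq_right_iff (hP.map toLinAlgEquiv') _).mpr h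

theorem eq_of_isSymm_of_isIdempotentElem_of_range_eq [DecidableEq m] {P Q : Matrix m m R}
    (hPs : P.IsSymm) (hQs : Q.IsSymm) (hPi : IsIdempotentElem P) (hQi : IsIdempotentElem Q)
    (h : LinearMap.range P.mulVecLin = LinearMap.range Q.mulVecLin) : P = Q :=
  calc P = (Q * P)ᵀ := by rw [mul_eq_right_of_range_le hQi h.le, hPs.eq]
    _ = P * Q := by rw [transpose_mul, hPs.eq, hQs.eq]
    _ = Q := mul_eq_right_of_range_le hPi h.ge

noncomputable def colProj (A : Matrix m p R) : Matrix m m R := A * (Aᵀ * A)⁻¹ * Aᵀ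

theorem isSymm_colProj (A : Matrix m p R) : (colProj A).IsSymm := by
  simp [IsSymm, colProj, transpose_mul, transpose_nonsing_inv, Matrix.mul_assoc]

variable {A : Matrix m p R}

theorem colProj_mul_self (hA : IsUnit (Aᵀ * A)) : colProj A * A = A := by
  rw [colProj, Matrix.mul_assoc, Matrix.mul_assoc,
    nonsing_inv_mul _ ((isUnit_iff_isUnit_det _).mp hA), Matrix.mul_one]

theorem isIdempotentElem_colProj (hA : IsUnit (Aᵀ * A)) : IsIdempotentElem (colProj A) :=
  calc colProj A * colProj A = colProj A * A * ((Aᵀ * A)⁻¹ * Aᵀ) := by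
        simp only [colProj, Matrix.mul_assoc]
    _ = colProj A := by rw [colProj_mul_self hA, colProj, Matrix.mul_assoc]

theorem range_mulVecLin_colProj (hA : IsUnit (Aᵀ * A)) :
    LinearMap.range (colProj A).mulVecLin = LinearMap.range A.mulVecLin := by
  apply le_antisymm
  · rw [colProj, Matrix.mul_assoc, mulVecLin_mul]
    exact LinearMap.range_comp_le_range _ _
  · conv_lhs => rw [← colProj_mul_self hA, mulVecLin_mul]
    exact LinearMap.range_comp_le_range _ _

end Projection

theorem continuousOn_colProj {m p : Type*} [Fintype m] [Fintype p] [DecidableEq p] :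
    ContinuousOn (colProj : Matrix m p ℝ → Matrix m m ℝ) {A | IsUnit (Aᵀ * A)} := by
  intro A hA
  have hinv : ContinuousAt (fun B : Matrix m p ℝ => (Bᵀ * B)⁻¹) A :=
    ContinuousAt.comp (g := Inv.inv) (f := fun B : Matrix m p ℝ => Bᵀ * B)
      (continuousAt_matrix_inv _ (NormedRing.inverse_continuousAt
        ((isUnit_iff_isUnit_det _).mp hA).unit))
      (continuous_id.matrix_transpose.matrix_mul continuous_id).continuousAt
  have hmul : Continuous fun BC : Matrix m p ℝ × Matrix p p ℝ => BC.1 * BC.2 * BC.1ᵀ :=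
    (continuous_fst.matrix_mul continuous_snd).matrix_mul continuous_fst.matrix_transpose
  exact (hmul.continuousAt.comp (continuousAt_id.prodMk hinv)).continuousWithinAt

theorem isCompact_setOf_transpose_mul_self_eq_one {m p : Type*} [Fintype m] [Fintype p]
    [DecidableEq p] : IsCompact {A : Matrix m p ℝ | Aᵀ * A = 1} := by
  have hclosed : IsClosed {A : Matrix m p ℝ | Aᵀ * A = 1} :=
    isClosed_eq (continuous_id.matrix_transpose.matrix_mul continuous_id) continuous_const
  refine (isCompact_univ_pi fun _ => isCompact_univ_pi fun _ =>
    isCompact_Icc (a := (-1 : ℝ)) (b := 1)).of_isClosed_subset hclosed fun A hA =>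
    Set.mem_univ_pi.mpr fun i => Set.mem_univ_pi.mpr fun j => ?_
  have hcol : ∑ l, A l j ^ 2 = 1 := by
    simpa [mul_apply, sq] using congr_fun₂ (show (of A)ᵀ * of A = 1 from hA) j j
  rw [Set.mem_Icc, ← abs_le, ← sq_le_one_iff_abs_le_one]
  exact hcol ▸ Finset.single_le_sum (fun l _ => sq_nonneg (A l j)) (Finset.mem_univ i)

end Matrix

open Matrix hiding col

variable {n k : ℕ}

theorem colSpan_eq_range_mulVecLin (A : Matrix (Fin n) (Fin k) ℝ) :
    colSpan n k A = LinearMap.range A.mulVecLin :=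
  (range_mulVecLin A).symm

theorem isUnit_transpose_mul_self_of_mem_stiefel {A : Matrix (Fin n) (Fin k) ℝ}
    (hA : A ∈ Stiefel n k) : IsUnit (Aᵀ * A) := by
  simpa [conjTranspose_eq_transpose_of_trivial] using
    (PosDef.conjTranspose_mul_self A (mulVec_injective_iff.mpr hA)).isUnit

theorem mem_stiefel_of_transpose_mul_self_eq_one {A : Matrix (Fin n) (Fin k) ℝ}
    (hA : Aᵀ * A = 1) : A ∈ Stiefel n k :=
  mulVec_injective_iff.mp <| Function.LeftInverse.injective (g := Aᵀ.mulVec) fun x => by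
    rw [mulVec_mulVec, hA, one_mulVec]

theorem exists_transpose_mul_self_eq_one_colSpan_eq (W : Submodule ℝ (Fin n → ℝ))
    (hW : Module.finrank ℝ W = k) :
    ∃ A : Matrix (Fin n) (Fin k) ℝ, Aᵀ * A = 1 ∧ colSpan n k A = W := by
  let e := WithLp.linearEquiv 2 ℝ (Fin n → ℝ)
  let W' := W.map e.symm.toLinearMap
  let b : OrthonormalBasis (Fin k) ℝ W' :=
    (stdOrthonormalBasis ℝ W').reindex (finCongr ((LinearEquiv.finrank_map_eq _ _).trans hW))
  refine ⟨Matrix.of fun i j => (b j : EuclideanSpace ℝ (Fin n)) i, ?_, ?_⟩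
  · ext j j'
    have h := orthonormal_iff_ite.mp b.orthonormal j j'
    rw [Submodule.coe_inner, PiLp.inner_apply] at h
    rw [mul_apply, one_apply, ← h]
    simp only [transpose_apply, of_apply, RCLike.inner_apply', conj_trivial]
  · change Submodule.span ℝ (Set.range ((e.toLinearMap ∘ₗ W'.subtype) ∘ b.toBasis)) = W
    rw [Set.range_comp, Submodule.span_image, b.toBasis.span_eq,
      Submodule.map_comp, Submodule.map_subtype_top]
    exact (Submodule.map_symm_eq_iff e).mp rfl

theorem col_surjective : Function.Surjective (col n k) := fun W =>
  have ⟨A, hA, hAW⟩ := exists_transpose_mul_self_eq_one_colSpan_eq W.1 W.2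
  ⟨⟨A, mem_stiefel_of_transpose_mul_self_eq_one hA⟩, Subtype.ext hAW⟩

theorem range_mulVecLin_colProj_eq_col (A : Stiefel n k) :
    LinearMap.range (colProj A.1).mulVecLin = (col n k A).1 := by
  rw [range_mulVecLin_colProj (isUnit_transpose_mul_self_of_mem_stiefel A.2)]
  exact (colSpan_eq_range_mulVecLin A.1).symm

theorem continuous_col : Continuous (col n k) := continuous_coinduced_rng

namespace Gr

instance : CompactSpace (Gr n k) := by
  let K := {A : Matrix (Fin n) (Fin k) ℝ | Aᵀ * A = 1}
  have : CompactSpace K := isCompact_iff_compactSpace.mp isCompact_setOf_transpose_mul_self_eq_one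
  let f : K → Gr n k := fun A => col n k ⟨A, mem_stiefel_of_transpose_mul_self_eq_one A.2⟩
  refine Function.Surjective.compactSpace (f := f)
    (continuous_col.comp (continuous_subtype_val.subtype_mk _)) fun W => ?_
  obtain ⟨A, hA, hAW⟩ := exists_transpose_mul_self_eq_one_colSpan_eq W.1 W.2
  exact ⟨⟨A, hA⟩, Subtype.ext hAW⟩

noncomputable def proj (W : Gr n k) : Matrix (Fin n) (Fin n) ℝ :=
  colProj (col_surjective W).choose.1

theorem range_mulVecLin_proj (W : Gr n k) : LinearMap.range (proj W).mulVecLin = W.1 := by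
  conv_rhs => rw [← (col_surjective W).choose_spec]
  exact range_mulVecLin_colProj_eq_col _

theorem proj_col (A : Stiefel n k) : proj (col n k A) = colProj A.1 := by
  have hB := isUnit_transpose_mul_self_of_mem_stiefel (col_surjective (col n k A)).choose.2
  have hA := isUnit_transpose_mul_self_of_mem_stiefel A.2
  refine eq_of_isSymm_of_isIdempotentElem_of_range_eq (isSymm_colProj _) (isSymm_colProj _)
    (isIdempotentElem_colProj hB) (isIdempotentElem_colProj hA) ?_
  rw [range_mulVecLin_proj, range_mulVecLin_colProj_eq_col]

theorem proj_injective : Function.Injective (proj : Gr n k → _) := fun V W h =>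
  Subtype.ext <| by rw [← range_mulVecLin_proj V, h, range_mulVecLin_proj]

theorem continuous_proj : Continuous (proj : Gr n k → _) := by
  refine continuous_coinduced_dom.mpr ?_
  simp only [Function.comp_def, proj_col]
  exact continuousOn_colProj.comp_continuous continuous_subtype_val
    fun A => isUnit_transpose_mul_self_of_mem_stiefel A.2

instance : T2Space (Gr n k) := .of_injective_continuous proj_injective continuous_proj

end Gr

theorem stmt17_general (n k : ℕ) :
    CompactSpace (Gr n k) ∧ T2Space (Gr n k) :=
  ⟨inferInstance, inferInstance⟩

/-- `Gr_k(ℝ^n)`, with the quotient topology induced by `col`, is a compact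
Hausdorff topological space. -/
theorem stmt17 (n k : ℕ) (hk : k ≤ n) :
    CompactSpace (Gr n k) ∧ T2Space (Gr n k) :=
  stmt17_general n k
end
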